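/- Let V be a real inner product space with norm ‖·‖, V_h a linear subspace of V, and W a linear subspace of V_h. Let a : V × V → ℝ be a bilinear form with a(w, w) ≥ μ·α·‖w‖² for all w ∈ W, where μ > 0 and α > 0. Let Q be a real vector space and b : V × Q → ℝ a bilinear form with b(w, q) = 0 for all w ∈ W and all q ∈ Q. Let u ∈ V and let Su, u_h ∈ V_h be such that u_h − Su ∈ W. Assume: (i) ‖Su − v‖ ≤ C₀·‖u − v‖ for all v ∈ V_h; and (ii) there exist a linear functional G : V → ℝ, a constant C₁ ≥ 0 with |G(w)| ≤ C₁·‖w‖ for all w ∈ W, and δ ∈ Q such that a(u_h − Su, w) + b(w, δ) = G(w) for all w ∈ W. Then for every v ∈ V_h, ‖u − u_h‖ ≤ (1 + C₀)·‖u − v‖ + C₁/(μ·α). -/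

import Mathlib

/-! The error splits as `u - u_h = (u - Su) + (Su - u_h)`. The first part is controlled by the
quasi-optimality of `Su`. The second part `e = u_h - Su` lies in `W`, where `b` vanishes, so
testing the error equation with `e` itself gives `a(e, e) = G(e)`; coercivity then yields
`μα‖e‖² ≤ C₁‖e‖`, i.e. `‖e‖ ≤ C₁ / (μα)`. -/

lemma le_div_of_mul_sq_le_mul {c C x : ℝ} (hc : 0 < c) (hC : 0 ≤ C) (hx : 0 ≤ x)
    (h : c * x ^ 2 ≤ C * x) : x ≤ C / c := by
  rw [le_div_iff₀ hc]
  rcases hx.eq_or_lt with rfl | hx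
  · simpa using hC
  · nlinarith

lemma norm_le_div_of_coercive_of_abs_le {V : Type*} [SeminormedAddCommGroup V]
    (a : V → V → ℝ) (G : V → ℝ) {c C : ℝ} (hc : 0 < c) (hC : 0 ≤ C) {e : V}
    (hcoer : c * ‖e‖ ^ 2 ≤ a e e) (hae : a e e = G e) (hG : |G e| ≤ C * ‖e‖) :
    ‖e‖ ≤ C / c :=
  le_div_of_mul_sq_le_mul hc hC (norm_nonneg e)
    (hcoer.trans (hae.trans_le ((le_abs_self _).trans hG)))

lemma norm_sub_le_of_quasiOptimal {V : Type*} [SeminormedAddCommGroup V] {u Su v : V} {C₀ : ℝ}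
    (hquasi : ‖Su - v‖ ≤ C₀ * ‖u - v‖) : ‖u - Su‖ ≤ (1 + C₀) * ‖u - v‖ :=
  calc ‖u - Su‖ ≤ ‖u - v‖ + ‖Su - v‖ := by
        simpa only [dist_eq_norm] using dist_triangle_right u Su v
    _ ≤ (1 + C₀) * ‖u - v‖ := by linarith

theorem stmt_4_general {V Q : Type*} [NormedAddCommGroup V] [InnerProductSpace ℝ V]
    [AddCommGroup Q] [Module ℝ Q]
    (Vh W : Submodule ℝ V)
    (a : V →ₗ[ℝ] V →ₗ[ℝ] ℝ) (b : V →ₗ[ℝ] Q →ₗ[ℝ] ℝ)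
    (μ α : ℝ) (hμ : 0 < μ) (hα : 0 < α)
    (hcoer : ∀ w ∈ W, μ * α * ‖w‖ ^ 2 ≤ a w w)
    (hb : ∀ w ∈ W, ∀ q : Q, b w q = 0)
    (u : V) (Su uh : V) (hW : uh - Su ∈ W)
    (C₀ : ℝ)
    (hquasi : ∀ v ∈ Vh, ‖Su - v‖ ≤ C₀ * ‖u - v‖)
    (G : V →ₗ[ℝ] ℝ) (C₁ : ℝ) (hC₁ : 0 ≤ C₁)
    (hG : ∀ w ∈ W, |G w| ≤ C₁ * ‖w‖)
    (δ : Q)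
    (herr : ∀ w ∈ W, a (uh - Su) w + b w δ = G w) :
    ∀ v ∈ Vh, ‖u - uh‖ ≤ (1 + C₀) * ‖u - v‖ + C₁ / (μ * α) := by
  intro v hv
  have hae : a (uh - Su) (uh - Su) = G (uh - Su) := by
    simpa only [hb _ hW δ, add_zero] using herr _ hW
  have hdiscrete : ‖uh - Su‖ ≤ C₁ / (μ * α) :=
    norm_le_div_of_coercive_of_abs_le (fun x y => a x y) G (mul_pos hμ hα) hC₁
      (hcoer _ hW) hae (hG _ hW)
  calc ‖u - uh‖ ≤ ‖u - Su‖ + ‖uh - Su‖ := by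
        simpa only [dist_eq_norm] using dist_triangle_right u uh Su
    _ ≤ (1 + C₀) * ‖u - v‖ + C₁ / (μ * α) :=
      add_le_add (norm_sub_le_of_quasiOptimal (hquasi v hv)) hdiscrete

/-- Abstract velocity error estimate: splitting `u − u_h = (u − Su) + (Su − u_h)` with
quasi-optimality of `Su` and coercivity of `a` on the discretely divergence-free subspace
`W` (on which `b` vanishes) together with a consistency functional bound gives
`‖u − u_h‖ ≤ (1 + C₀)·‖u − v‖ + C₁/(μ·α)` for all `v ∈ V_h`. -/
theorem stmt_4 {V Q : Type*} [NormedAddCommGroup V] [InnerProductSpace ℝ V]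
    [AddCommGroup Q] [Module ℝ Q]
    (Vh W : Submodule ℝ V) (hWV : W ≤ Vh)
    (a : V →ₗ[ℝ] V →ₗ[ℝ] ℝ) (b : V →ₗ[ℝ] Q →ₗ[ℝ] ℝ)
    (μ α : ℝ) (hμ : 0 < μ) (hα : 0 < α)
    (hcoer : ∀ w ∈ W, μ * α * ‖w‖ ^ 2 ≤ a w w)
    (hb : ∀ w ∈ W, ∀ q : Q, b w q = 0)
    (u : V) (Su uh : V) (hSu : Su ∈ Vh) (huh : uh ∈ Vh) (hW : uh - Su ∈ W)
    (C₀ : ℝ) (hC₀ : 0 ≤ C₀)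
    (hquasi : ∀ v ∈ Vh, ‖Su - v‖ ≤ C₀ * ‖u - v‖)
    (G : V →ₗ[ℝ] ℝ) (C₁ : ℝ) (hC₁ : 0 ≤ C₁)
    (hG : ∀ w ∈ W, |G w| ≤ C₁ * ‖w‖)
    (δ : Q)
    (herr : ∀ w ∈ W, a (uh - Su) w + b w δ = G w) :
    ∀ v ∈ Vh, ‖u - uh‖ ≤ (1 + C₀) * ‖u - v‖ + C₁ / (μ * α) :=
  stmt_4_general Vh W a b μ α hμ hα hcoer hb u Su uh hW C₀ hquasi G C₁ hC₁ hG δ herr
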